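/- Let N be a nonnegative-integer-valued random variable with everywhere-finite probability generating function (E[z^N] < ∞ for all complex z), independent of an i.i.d. sequence X₁, X₂, … with subexponential distribution F. Then lim_{x→∞} P[Σ_{i=1}^{N+1} Xᵢ > x, and Xᵢ ≤ x for all 1 ≤ i ≤ N+1] / (1-F(x)) = 0. -/

import Mathlib

/-!
Conditioning on `N`, the probability in question equals `∑ₙ P[N = n] Qₙ₊₁(x)` with
`Qₘ(x) = P[Sₘ > x, max Xᵢ ≤ x]`. As the `Xᵢ` are positive, `P[Sₘ > x] = Qₘ(x) + 1 - F(x)ᵐ`,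
and `1 - F(x)ᵐ ∼ m F̄(x)`, so subexponentiality gives `Qₘ(x) = o(F̄(x))` for each `m`.
Conditioning on the last summand gives `P[Sₙ₊₁ > x] ≤ C P[S₂ > x]` whenever `P[Sₙ > z] ≤ C F̄(z)`
for all `z`; since `P[S₂ > x] ≤ 3 F̄(x)` for large `x`, this yields the Kesten-type bound
`P[Sₙ > x] ≤ K 3ⁿ F̄(x)`. As `E[3ᴺ] < ∞`, dominated convergence applies to the series.
-/

open MeasureTheory ProbabilityTheory Filter Set Asymptotics
open scoped Classical

/-- Tail of a distribution (measure) on `ℝ`: `F̄(x) = μ(x,∞)`. -/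
noncomputable def tailP (μ : Measure ℝ) (x : ℝ) : ℝ := (μ (Set.Ioi x)).toReal

/-- Tail of the `n`-fold convolution: `P[X₁+⋯+Xₙ > x]` for i.i.d. `Xᵢ ∼ μ`. -/
noncomputable def convTail (μ : Measure ℝ) (n : ℕ) (x : ℝ) : ℝ :=
  ((Measure.pi fun _ : Fin n => μ) {y | x < ∑ i, y i}).toReal

/-- A probability distribution on `(0,∞)` is subexponential if
`(1-F^{*n}(x))/(1-F(x)) → n` for all `n ≥ 2`. -/
def Subexponential (μ : Measure ℝ) : Prop :=
  IsProbabilityMeasure μ ∧ μ (Set.Ioi 0) = 1 ∧ (∀ x : ℝ, 0 < tailP μ x) ∧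
    ∀ n : ℕ, 2 ≤ n →
      Tendsto (fun x => convTail μ n x / tailP μ x) atTop (nhds (n : ℝ))

open scoped ENNReal Topology

noncomputable def sumTail (μ : Measure ℝ) (n : ℕ) (x : ℝ) : ℝ≥0∞ :=
  (Measure.pi fun _ : Fin n => μ) {y | x < ∑ i, y i}

noncomputable def truncSumTail (μ : Measure ℝ) (n : ℕ) (x : ℝ) : ℝ≥0∞ :=
  (Measure.pi fun _ : Fin n => μ) {y | x < ∑ i, y i ∧ ∀ i, y i ≤ x}

lemma measurableSet_lt_sum (n : ℕ) (x : ℝ) : MeasurableSet {y : Fin n → ℝ | x < ∑ i, y i} :=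
  measurableSet_lt measurable_const (by fun_prop)

lemma measurableSet_lt_sum_and_le (n : ℕ) (x : ℝ) :
    MeasurableSet {y : Fin n → ℝ | x < ∑ i, y i ∧ ∀ i, y i ≤ x} := by
  simp only [ofPred_and, ofPred_forall]
  exact (measurableSet_lt_sum n x).inter
    (.iInter fun i => measurableSet_le (measurable_pi_apply i) measurable_const)

section SumTail

variable {μ : Measure ℝ}

lemma convTail_eq_toReal_sumTail (n : ℕ) (x : ℝ) : convTail μ n x = (sumTail μ n x).toReal := rfl

lemma sumTail_zero_of_nonneg {x : ℝ} (hx : 0 ≤ x) : sumTail μ 0 x = 0 := by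
  simp [sumTail, hx.not_gt]

lemma truncSumTail_le_sumTail (n : ℕ) (x : ℝ) : truncSumTail μ n x ≤ sumTail μ n x :=
  measure_mono fun _ hy => hy.1

variable [IsProbabilityMeasure μ]

lemma sumTail_one (x : ℝ) : sumTail μ 1 x = μ (Ioi x) := by
  have : {y : Fin 1 → ℝ | x < ∑ i, y i} = univ.pi fun _ => Ioi x := by
    ext y
    simp [Fin.forall_fin_one]
  rw [sumTail, this, Measure.pi_pi]
  simp

lemma sumTail_succ (n : ℕ) (x : ℝ) : sumTail μ (n + 1) x = ∫⁻ y, sumTail μ n (x - y) ∂μ := by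
  set A : Set (ℝ × (Fin n → ℝ)) := {p | x < p.1 + ∑ i, p.2 i}
  have hA : MeasurableSet A := measurableSet_lt measurable_const (by fun_prop)
  have hpre : MeasurableEquiv.piFinSuccAbove (fun _ : Fin (n + 1) => ℝ) 0 ⁻¹' A
      = {y | x < ∑ i, y i} := by
    ext y
    simp [A, Fin.sum_univ_succ, Fin.tail]
  rw [sumTail, ← hpre, (measurePreserving_piFinSuccAbove (fun _ => μ) 0).measure_preimage
    hA.nullMeasurableSet, Measure.prod_apply hA]
  congr with y
  simp only [sumTail, A, preimage_ofPred_eq, sub_lt_iff_lt_add']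

lemma sumTail_two_eq_lintegral (x : ℝ) : sumTail μ 2 x = ∫⁻ y, μ (Ioi (x - y)) ∂μ := by
  simp only [sumTail_succ 1, sumTail_one]

lemma sumTail_succ_le_mul_sumTail_two {C : ℝ≥0∞} {n : ℕ}
    (hn : ∀ z, sumTail μ n z ≤ C * μ (Ioi z)) (x : ℝ) :
    sumTail μ (n + 1) x ≤ C * sumTail μ 2 x := by
  have hmeas : Measurable fun y => μ (Ioi (x - y)) :=
    Monotone.measurable fun a b hab => measure_mono (Ioi_subset_Ioi (by linarith))
  calc sumTail μ (n + 1) x = ∫⁻ y, sumTail μ n (x - y) ∂μ := sumTail_succ n x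
    _ ≤ ∫⁻ y, C * μ (Ioi (x - y)) ∂μ := lintegral_mono fun y => hn (x - y)
    _ = C * sumTail μ 2 x := by rw [lintegral_const_mul _ hmeas, sumTail_two_eq_lintegral]

/-- A geometric form of Kesten's bound. -/
lemma exists_sumTail_le_mul_pow_mul (htail : ∀ x, μ (Ioi x) ≠ 0) {c : ℝ≥0∞} (hc : 1 ≤ c)
    (h2 : ∀ᶠ x in atTop, sumTail μ 2 x ≤ c * μ (Ioi x)) :
    ∃ K : ℝ≥0∞, K ≠ ∞ ∧ ∀ n x, sumTail μ n x ≤ K * c ^ n * μ (Ioi x) := by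
  obtain ⟨t, ht⟩ := eventually_atTop.1 (h2.and (eventually_ge_atTop 0))
  set K := (μ (Ioi t))⁻¹
  have hsmall : ∀ n, ∀ x < t, sumTail μ n x ≤ K * c ^ n * μ (Ioi x) := fun n x hxt =>
    calc sumTail μ n x ≤ 1 := prob_le_one
      _ = K * μ (Ioi t) := (ENNReal.inv_mul_cancel (htail t) (measure_ne_top _ _)).symm
      _ ≤ K * (c ^ n * μ (Ioi x)) := by
        gcongr
        exact le_mul_of_one_le_of_le (one_le_pow₀ hc) (measure_mono (Ioi_subset_Ioi hxt.le))
      _ = K * c ^ n * μ (Ioi x) := (mul_assoc _ _ _).symm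
  refine ⟨K, ENNReal.inv_ne_top.2 (htail t), fun n => ?_⟩
  induction n with
  | zero =>
    intro x
    rcases lt_or_ge x t with hxt | hxt
    · exact hsmall 0 x hxt
    · simp [sumTail_zero_of_nonneg (ht x hxt).2]
  | succ n ih =>
    intro x
    rcases lt_or_ge x t with hxt | hxt
    · exact hsmall (n + 1) x hxt
    · calc sumTail μ (n + 1) x ≤ K * c ^ n * sumTail μ 2 x :=
            sumTail_succ_le_mul_sumTail_two ih x
        _ ≤ K * c ^ n * (c * μ (Ioi x)) := by gcongr; exact (ht x hxt).1
        _ = K * c ^ (n + 1) * μ (Ioi x) := by ring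

lemma sumTail_eq_truncSumTail_add (hpos : μ (Ioi 0) = 1) (m : ℕ) (x : ℝ) :
    sumTail μ m x = truncSumTail μ m x + (1 - μ (Iic x) ^ m) := by
  set π := Measure.pi fun _ : Fin m => μ
  set S := {y : Fin m → ℝ | x < ∑ i, y i}
  set D := univ.pi fun _ : Fin m => Iic x
  set G := univ.pi fun _ : Fin m => Ioi (0 : ℝ)
  have hD : MeasurableSet D := .univ_pi fun _ => measurableSet_Iic
  have hG : π Gᶜ = 0 := by
    rw [prob_compl_eq_zero_iff (.univ_pi fun _ => measurableSet_Ioi), Measure.pi_pi]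
    simp [hpos]
  have hSD : π (S \ D) = π Dᶜ := by
    refine le_antisymm (measure_mono fun y hy => hy.2) ?_
    rw [← measure_inter_conull hG]
    refine measure_mono fun y ⟨hyD, hyG⟩ => ⟨?_, hyD⟩
    obtain ⟨i, -, hi⟩ := not_forall₂.1 hyD
    exact (not_le.1 hi).trans_le
      (Finset.single_le_sum (fun j _ => (show 0 < y j from hyG j trivial).le) (Finset.mem_univ i))
  have hSD' : S ∩ D = {y | x < ∑ i, y i ∧ ∀ i, y i ≤ x} := by
    ext y
    simp [S, D, Pi.le_def]
  rw [sumTail, ← measure_inter_add_sdiff S hD, hSD, hSD', prob_compl_eq_one_sub hD,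
    Measure.pi_pi]
  simp [truncSumTail]

lemma tailP_eq_one_sub (x : ℝ) : tailP μ x = 1 - (μ (Iic x)).toReal := by
  rw [tailP, ← compl_Iic, prob_compl_eq_one_sub measurableSet_Iic,
    ENNReal.toReal_sub_of_le prob_le_one ENNReal.one_ne_top, ENNReal.toReal_one]

lemma convTail_eq_add (hpos : μ (Ioi 0) = 1) (m : ℕ) (x : ℝ) :
    convTail μ m x = (truncSumTail μ m x).toReal
      + tailP μ x * ∑ k ∈ Finset.range m, (μ (Iic x)).toReal ^ k := by
  rw [convTail_eq_toReal_sumTail, sumTail_eq_truncSumTail_add hpos,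
    ENNReal.toReal_add (by exact measure_ne_top _ _) (by simp), tailP_eq_one_sub, mul_neg_geom_sum,
    ENNReal.toReal_sub_of_le (pow_le_one' prob_le_one m) ENNReal.one_ne_top,
    ENNReal.toReal_pow, ENNReal.toReal_one]

lemma tendsto_toReal_measure_Iic_atTop : Tendsto (fun x => (μ (Iic x)).toReal) atTop (𝓝 1) := by
  have h := tendsto_measure_Iic_atTop μ
  rw [measure_univ] at h
  exact (ENNReal.tendsto_toReal ENNReal.one_ne_top).comp h

end SumTail

namespace Subexponential

variable {μ : Measure ℝ}

lemma isProbabilityMeasure (hμ : Subexponential μ) : IsProbabilityMeasure μ := hμ.1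

lemma tailP_pos (hμ : Subexponential μ) (x : ℝ) : 0 < tailP μ x := hμ.2.2.1 x

lemma tendsto_convTail_div_tailP (hμ : Subexponential μ) {n : ℕ} (hn : 1 ≤ n) :
    Tendsto (fun x => convTail μ n x / tailP μ x) atTop (𝓝 (n : ℝ)) := by
  obtain ⟨_, -, htail, hsub⟩ := hμ
  rcases hn.eq_or_lt with rfl | hn
  · refine tendsto_const_nhds.congr fun x => ?_
    rw [convTail_eq_toReal_sumTail, sumTail_one, Nat.cast_one, ← tailP, div_self (htail x).ne']
  · exact hsub n hn

lemma tendsto_truncSumTail_div_tailP (hμ : Subexponential μ) {n : ℕ} (hn : 1 ≤ n) :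
    Tendsto (fun x => (truncSumTail μ n x).toReal / tailP μ x) atTop (𝓝 0) := by
  have hconv := hμ.tendsto_convTail_div_tailP hn
  obtain ⟨_, hpos, htail, -⟩ := hμ
  have hgeom : Tendsto (fun x => ∑ k ∈ Finset.range n, (μ (Iic x)).toReal ^ k) atTop (𝓝 n) := by
    simpa using tendsto_finsetSum (Finset.range n) fun k _ =>
      (tendsto_toReal_measure_Iic_atTop (μ := μ)).pow k
  refine (sub_self (n : ℝ) ▸ hconv.sub hgeom).congr fun x => ?_
  rw [convTail_eq_add hpos, add_div, mul_div_cancel_left₀ _ (htail x).ne', add_sub_cancel_right]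

lemma eventually_sumTail_two_le (hμ : Subexponential μ) :
    ∀ᶠ x in atTop, sumTail μ 2 x ≤ 3 * μ (Ioi x) := by
  have := hμ.isProbabilityMeasure
  filter_upwards [(hμ.2.2.2 2 le_rfl).eventually (eventually_le_nhds (by norm_num : (2 : ℝ) < 3))]
    with x hx
  rw [div_le_iff₀ (hμ.tailP_pos x), convTail_eq_toReal_sumTail, tailP] at hx
  rwa [← ENNReal.toReal_le_toReal (by exact measure_ne_top _ _) (by finiteness),
    ENNReal.toReal_mul, ENNReal.toReal_ofNat]

lemma exists_truncSumTail_div_tailP_le (hμ : Subexponential μ) :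
    ∃ K : ℝ, ∀ n x, (truncSumTail μ n x).toReal / tailP μ x ≤ K * 3 ^ n := by
  have := hμ.isProbabilityMeasure
  obtain ⟨K, hK, hbound⟩ := exists_sumTail_le_mul_pow_mul
    (fun x h => (hμ.tailP_pos x).ne' (by rw [tailP, h, ENNReal.toReal_zero]))
    (by norm_num) hμ.eventually_sumTail_two_le
  refine ⟨K.toReal, fun n x => (div_le_iff₀ (hμ.tailP_pos x)).2 ?_⟩
  have := (truncSumTail_le_sumTail n x).trans (hbound n x)
  rw [← ENNReal.toReal_le_toReal (by exact measure_ne_top _ _) (by finiteness)] at this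
  simpa [tailP] using this

end Subexponential

section RandomIndex

variable {Ω : Type*} [MeasurableSpace Ω] {P : Measure Ω}

lemma measure_setOf_mem_eq_tsum {ι β : Type*} [Countable ι] [MeasurableSpace ι]
    [MeasurableSingletonClass ι] [MeasurableSpace β] {N : Ω → ι} {V : Ω → β}
    (hN : Measurable N) (hV : Measurable V) (hNV : IndepFun N V P) {A : ι → Set β}
    (hA : ∀ i, MeasurableSet (A i)) :
    P {ω | V ω ∈ A (N ω)} = ∑' i, P (N ⁻¹' {i}) * P (V ⁻¹' A i) := by
  have hunion : {ω | V ω ∈ A (N ω)} = ⋃ i, N ⁻¹' {i} ∩ V ⁻¹' A i := by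
    ext ω
    simp
  rw [hunion, measure_iUnion _ fun i => (hN (measurableSet_singleton i)).inter (hV (hA i))]
  · exact tsum_congr fun i =>
      hNV.measure_inter_preimage_eq_mul _ _ (measurableSet_singleton i) (hA i)
  · exact fun i j hij => Disjoint.mono inter_subset_left inter_subset_left
      ((disjoint_singleton.2 hij).preimage N)

lemma summable_measure_preimage_singleton_mul_pow {N : Ω → ℕ} (hN : Measurable N) {r : ℝ}
    (hr : 0 ≤ r) (h : Integrable (fun ω => r ^ N ω) P) :
    Summable fun n => (P (N ⁻¹' {n})).toReal * r ^ n := by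
  have hfin := h.lintegral_lt_top
  rw [← lintegral_map (f := fun n => ENNReal.ofReal (r ^ n)) (by fun_prop) hN,
    lintegral_countable'] at hfin
  refine (ENNReal.summable_toReal hfin.ne).congr fun n => ?_
  rw [Measure.map_apply hN (measurableSet_singleton n), ENNReal.toReal_mul,
    ENNReal.toReal_ofReal (pow_nonneg hr n), mul_comm]

end RandomIndex

lemma measure_truncRandomSum_eq_tsum {Ω : Type*} [MeasurableSpace Ω] {P : Measure Ω}
    {μ : Measure ℝ} {N : Ω → ℕ} (hN : Measurable N) {X : ℕ → Ω → ℝ}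
    (hX : ∀ i, Measurable (X i)) (hindep : iIndepFun X P) (hlaw : ∀ i, P.map (X i) = μ)
    (hNX : IndepFun N (fun ω i => X i ω) P) (x : ℝ) :
    P {ω | x < ∑ i ∈ Finset.range (N ω + 1), X i ω ∧ ∀ i ∈ Finset.range (N ω + 1), X i ω ≤ x}
      = ∑' n, P (N ⁻¹' {n}) * truncSumTail μ (n + 1) x := by
  let A n : Set (ℕ → ℝ) :=
    (fun v (i : Fin (n + 1)) => v i) ⁻¹' {y | x < ∑ i, y i ∧ ∀ i, y i ≤ x}
  have hA n : MeasurableSet (A n) := (measurableSet_lt_sum_and_le (n + 1) x).preimage (by fun_prop)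
  have hevent : {ω | x < ∑ i ∈ Finset.range (N ω + 1), X i ω ∧
      ∀ i ∈ Finset.range (N ω + 1), X i ω ≤ x} = {ω | (fun i => X i ω) ∈ A (N ω)} := by
    ext ω
    simp [A, Fin.sum_univ_eq_sum_range (fun i => X i ω), Fin.forall_iff]
  have hlaw_fin n : P.map (fun ω (i : Fin n) => X i ω) = Measure.pi fun _ => μ := by
    rw [iIndepFun.map_fun_eq_pi_map (f := fun i : Fin n => X i) (fun i => (hX i).aemeasurable)
      (hindep.precomp Fin.val_injective)]
    simp only [hlaw]
  rw [hevent, measure_setOf_mem_eq_tsum hN (by fun_prop) hNX hA]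
  refine tsum_congr fun n => ?_
  rw [truncSumTail, ← hlaw_fin, Measure.map_apply (by fun_prop) (measurableSet_lt_sum_and_le _ x)]
  rfl

/-- if `N` has an everywhere-finite probability generating function and is
independent of an i.i.d. subexponential sequence `X₁, X₂, …`, then
`P[Σ_{i=1}^{N+1} Xᵢ > x, Xᵢ ≤ x for all i ≤ N+1] / (1-F(x)) → 0` as `x → ∞`. -/
theorem random_truncated_sum_littleO
    {Ω : Type} [MeasurableSpace Ω] (P : Measure Ω) [IsProbabilityMeasure P]
    (μ : Measure ℝ) (hμ : Subexponential μ)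
    (N : Ω → ℕ) (hNmeas : Measurable N)
    (hpgf : ∀ z : ℂ, Integrable (fun ω => z ^ N ω) P)
    (X : ℕ → Ω → ℝ) (hmeas : ∀ i, Measurable (X i))
    (hindep : iIndepFun X P)
    (hlaw : ∀ i, Measure.map (X i) P = μ)
    (hNindep : IndepFun N (fun ω => fun i => X i ω) P) :
    Tendsto (fun x =>
        (P {ω | x < ∑ i ∈ Finset.range (N ω + 1), X i ω ∧
              ∀ i ∈ Finset.range (N ω + 1), X i ω ≤ x}).toReal / tailP μ x)
      atTop (nhds 0) := by
  have := hμ.isProbabilityMeasure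
  obtain ⟨K, hK⟩ := hμ.exists_truncSumTail_div_tailP_le
  have hsum : Summable fun n => (P (N ⁻¹' {n})).toReal * 3 ^ n :=
    summable_measure_preimage_singleton_mul_pow hNmeas (by norm_num) (by simpa using (hpgf 3).norm)
  have hbound x n :
      ‖(P (N ⁻¹' {n})).toReal * ((truncSumTail μ (n + 1) x).toReal / tailP μ x)‖
        ≤ 3 * K * ((P (N ⁻¹' {n})).toReal * 3 ^ n) := by
    have hp : 0 ≤ (P (N ⁻¹' {n})).toReal := ENNReal.toReal_nonneg
    rw [Real.norm_of_nonneg (mul_nonneg hp (div_nonneg ENNReal.toReal_nonneg (hμ.tailP_pos x).le))]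
    calc _ ≤ (P (N ⁻¹' {n})).toReal * (K * 3 ^ (n + 1)) := mul_le_mul_of_nonneg_left (hK _ x) hp
      _ = 3 * K * ((P (N ⁻¹' {n})).toReal * 3 ^ n) := by ring
  have hlim := tendsto_tsum_of_dominated_convergence (hsum.mul_left (3 * K))
    (fun n => (hμ.tendsto_truncSumTail_div_tailP n.succ_pos).const_mul _) (.of_forall hbound)
  simp only [mul_zero, tsum_zero] at hlim
  refine hlim.congr fun x => ?_
  rw [measure_truncRandomSum_eq_tsum hNmeas hmeas hindep hlaw hNindep,
    ENNReal.tsum_toReal_eq fun n =>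
      ENNReal.mul_ne_top (measure_ne_top _ _) (by exact measure_ne_top _ _), ← tsum_div_const]
  simp only [ENNReal.toReal_mul, mul_div_assoc]
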